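/- arXiv:1408.0531 — 5 statements merged into one kernel-verified Lean document; each statement's English description precedes it below -/
import Mathlib

section
/- Let w be an integer edge weighting of K_n (n ≥ 6) and let C = v_1v_2v_3v_4v_1 be an unbalanced 4-cycle, i.e., w(v_1v_2)+w(v_3v_4) ≠ w(v_2v_3)+w(v_4v_1). Then for every edge ab of K_n vertex-disjoint from C, at least one of the four 4-cycles av_1v_2ba, bv_2v_3ab, av_3v_4ba, bv_4v_1ab is unbalanced. -/
open Finset

/-- A Hamilton cycle of `K_n`, viewed as a connected 2-regular spanning subgraph
of the complete graph on vertex set `Fin n`. -/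
def IsHamCycle {n : ℕ} (H : SimpleGraph (Fin n)) : Prop :=
  H.Connected ∧ ∀ v, (H.neighborSet v).ncard = 2

/-- Total weight `w(G)` of (the edges of) a subgraph `G` of `K_n`. -/
noncomputable def wt {n : ℕ} (w : Sym2 (Fin n) → ℤ) (G : SimpleGraph (Fin n)) : ℤ :=
  ∑ e ∈ (Set.toFinite G.edgeSet).toFinset, w e

/-- The 4-cycle `x1 x2 x3 x4 x1` is balanced for `w`. -/
def BalancedC4 {n : ℕ} (w : Sym2 (Fin n) → ℤ) (x1 x2 x3 x4 : Fin n) : Prop :=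
  w s(x1, x2) + w s(x3, x4) = w s(x2, x3) + w s(x4, x1)

/-- if `C = v1 v2 v3 v4 v1` is an unbalanced 4-cycle and `ab` is an edge
vertex-disjoint from `C`, then one of the 4-cycles `a v1 v2 b a`, `b v2 v3 a b`,
`a v3 v4 b a`, `b v4 v1 a b` is unbalanced. -/
theorem stmt_10 (n : ℕ) (hn : 6 ≤ n) (w : Sym2 (Fin n) → ℤ) (v1 v2 v3 v4 a b : Fin n)
    (hdist : List.Pairwise (· ≠ ·) [v1, v2, v3, v4, a, b])
    (hC : ¬ BalancedC4 w v1 v2 v3 v4) :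
    ¬ BalancedC4 w a v1 v2 b ∨ ¬ BalancedC4 w b v2 v3 a ∨
      ¬ BalancedC4 w a v3 v4 b ∨ ¬ BalancedC4 w b v4 v1 a := by
  by_contra h
  push_neg at h
  obtain ⟨h1, h2, h3, h4⟩ := h
  apply hC
  unfold BalancedC4 at *
  rw [show s(a, v1) = s(v1, a) from Sym2.eq_swap, show s(v2, b) = s(b, v2) from Sym2.eq_swap,
    show s(b, a) = s(a, b) from Sym2.eq_swap] at h1
  rw [show s(v3, a) = s(a, v3) from Sym2.eq_swap] at h2
  rw [show s(v4, b) = s(b, v4) from Sym2.eq_swap,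
    show s(b, a) = s(a, b) from Sym2.eq_swap] at h3
  omega
end

section
/- Let H and C_1, …, C_r be subgraphs of K_n where H is a Hamilton cycle and each C_i is a 4-cycle correctly embedded in H (each C_i has exactly two opposite edges in H and switching gives a Hamilton cycle), and no two of the C_i are crossing relative to H. Then the symmetric difference E(H) △ E(C_1) △ ⋯ △ E(C_r) forms a Hamilton cycle of K_n. -/
/-!
Switching the correctly embedded 4-cycle on the edges at positions `a < b` of the cycle
`0 1 ⋯ (n-1) 0` yields its image under the permutation `blockRev a b` that reverses the block of
positions `a + 1, …, b`. Let `p` be a chord of smallest span `p.2 - p.1`. Since the chords are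
pairwise non-crossing with distinct endpoints, every other chord has both endpoints outside
`[p.1, p.2]`, so `blockRev p.1 p.2` fixes its 4-cycle. Hence the symmetric difference for the
whole list is the image under `blockRev p.1 p.2` of the symmetric difference for the remaining
chords, which is a Hamilton cycle by induction.
-/

open Finset

/-- The standard Hamilton cycle `0 1 2 ⋯ (n-1) 0` of `K_n`. -/
def stdCycle (n : ℕ) [NeZero n] : SimpleGraph (Fin n) := SimpleGraph.fromRel (fun i j => j = i + 1)

/-- The 4-cycle of `K_n` correctly embedded in the standard Hamilton cycle that uses its
edges `e_a = {a, a+1}` and `e_b = {b, b+1}` together with the two crossing chords. -/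
def C4 {n : ℕ} [NeZero n] (a b : Fin n) : Set (Sym2 (Fin n)) :=
  {s(a, a + 1), s(b, b + 1), s(a, b), s(a + 1, b + 1)}

/-- Interleaving (crossing) of chords, via the positions along the standard cycle. -/
def Crossing {n : ℕ} (p q : Fin n × Fin n) : Prop :=
  (p.1 < q.1 ∧ q.1 < p.2 ∧ p.2 < q.2) ∨ (q.1 < p.1 ∧ p.1 < q.2 ∧ q.2 < p.2)

/-- Iterated symmetric difference `A △ B₁ △ ⋯ △ B_r`. -/
def symmDiffList {α : Type*} : Set α → List (Set α) → Set α
  | A, [] => A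
  | A, B :: L => symmDiffList (symmDiff A B) L

section SymmDiffList

variable {α : Type*}

theorem symmDiffList_perm {L₁ L₂ : List (Set α)} (h : L₁.Perm L₂) (A : Set α) :
    symmDiffList A L₁ = symmDiffList A L₂ := by
  induction h generalizing A with
  | nil => rfl
  | cons _ _ ih => exact ih _
  | swap x y l => simp only [symmDiffList, symmDiff_right_comm]
  | trans _ _ ih₁ ih₂ => rw [ih₁, ih₂]

theorem image_symmDiffList {β : Type*} {f : α → β} (hf : f.Injective) (A : Set α)
    (L : List (Set α)) : f '' symmDiffList A L = symmDiffList (f '' A) (L.map (f '' ·)) := by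
  induction L generalizing A with
  | nil => rfl
  | cons B L ih => simp only [symmDiffList, List.map_cons, ih, Set.image_symmDiff hf]

theorem Set.symmDiff_union_of_subset_of_disjoint {A S T : Set α} (hS : S ⊆ A)
    (hT : Disjoint A T) : symmDiff A (S ∪ T) = A \ S ∪ T := by
  ext x
  have hSx : x ∈ S → x ∈ A := fun h => hS h
  have hTx : x ∈ A → x ∉ T := fun h => Set.disjoint_left.mp hT h
  simp only [Set.mem_symmDiff, Set.mem_union, Set.mem_sdiff]
  tauto

end SymmDiffList

theorem Fin.val_add_one_cases {n : ℕ} [NeZero n] (i : Fin n) :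
    (i + 1).val = i.val + 1 ∧ i.val + 1 < n ∨ (i + 1).val = 0 ∧ i.val + 1 = n := by
  rcases Nat.lt_or_ge (i.val + 1) n with h | h
  · exact .inl ⟨Fin.val_add_one_of_lt' h, h⟩
  · have h : i.val + 1 = n := by omega
    exact .inr ⟨by simp [Fin.val_add, h], h⟩

theorem Fin.add_one_ne_self {n : ℕ} [NeZero n] (hn : 2 ≤ n) (i : Fin n) : i + 1 ≠ i := by
  have := i.val_add_one_cases
  intro h
  have := congrArg Fin.val h
  omega

section BlockReversal

variable {n : ℕ}

def blockRev (a b i : Fin n) : Fin n :=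
  if h : a < i ∧ i ≤ b then ⟨a + b + 1 - i, by omega⟩ else i

variable {a b i : Fin n}

theorem val_blockRev_of_mem (h : a < i ∧ i ≤ b) : (blockRev a b i).val = a + b + 1 - i := by
  rw [blockRev, dif_pos h]

theorem blockRev_of_notMem (h : ¬(a < i ∧ i ≤ b)) : blockRev a b i = i := by
  rw [blockRev, dif_neg h]

theorem blockRev_involutive (a b : Fin n) : Function.Involutive (blockRev a b) := by
  intro i
  by_cases h : a < i ∧ i ≤ b
  · have h₁ := val_blockRev_of_mem h
    apply Fin.ext
    rw [val_blockRev_of_mem (by omega), h₁]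
    omega
  · rw [blockRev_of_notMem h, blockRev_of_notMem h]

theorem blockRev_of_notMem_Icc (hi : i ∉ Set.Icc a b) : blockRev a b i = i :=
  blockRev_of_notMem fun h => hi ⟨h.1.le, h.2⟩

variable [NeZero n]

theorem blockRev_add_one_left (hab : a < b) : blockRev a b (a + 1) = b := by
  have := a.val_add_one_cases
  apply Fin.ext
  rw [val_blockRev_of_mem (by omega)]
  omega

theorem blockRev_right (hab : a < b) : blockRev a b b = a + 1 := by
  have := a.val_add_one_cases
  apply Fin.ext
  rw [val_blockRev_of_mem (by omega)]
  omega

theorem blockRev_add_one_of_notMem_Ico (hi : i ∉ Set.Ico a b) :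
    blockRev a b (i + 1) = i + 1 := by
  have := i.val_add_one_cases
  simp only [Set.mem_Ico, not_and_or, not_le, not_lt] at hi
  exact blockRev_of_notMem (by omega)

theorem exists_map_blockRev_edge (hia : i ≠ a) (hib : i ≠ b) :
    ∃ j, j ≠ a ∧ j ≠ b ∧ Sym2.map (blockRev a b) s(i, i + 1) = s(j, j + 1) := by
  by_cases h : a < i ∧ i < b
  · -- inside the block, the edge at `i` goes to the edge at the mirror position `a + b - i`
    obtain ⟨j, hj⟩ : ∃ j : Fin n, j.val = a + b - i := ⟨⟨a + b - i, by omega⟩, rfl⟩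
    have := i.val_add_one_cases
    have := j.val_add_one_cases
    refine ⟨j, Fin.ne_of_val_ne (by omega), Fin.ne_of_val_ne (by omega), ?_⟩
    rw [Sym2.map_mk, Sym2.eq_swap]
    congr 1 <;> apply Fin.ext <;> rw [val_blockRev_of_mem (by omega)] <;> omega
  · refine ⟨i, hia, hib, ?_⟩
    have hi : i ∉ Set.Ico a b := fun h' => h ⟨lt_of_le_of_ne h'.1 (Ne.symm hia), h'.2⟩
    rw [Sym2.map_mk, blockRev_add_one_of_notMem_Ico hi,
      blockRev_of_notMem fun h' => hi ⟨h'.1.le, lt_of_le_of_ne h'.2 hib⟩]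

end BlockReversal

section StdCycle

variable {n : ℕ} [NeZero n]

theorem mk_mem_edgeSet_stdCycle {u v : Fin n} :
    s(u, v) ∈ (stdCycle n).edgeSet ↔ u ≠ v ∧ (v = u + 1 ∨ u = v + 1) :=
  SimpleGraph.fromRel_adj (fun i j : Fin n => j = i + 1) u v

theorem edgeSet_stdCycle (hn : 2 ≤ n) :
    (stdCycle n).edgeSet = Set.range fun i : Fin n => s(i, i + 1) := by
  ext e
  induction e using Sym2.ind with
  | _ u v =>
    rw [mk_mem_edgeSet_stdCycle]
    simp only [Set.mem_range, Sym2.eq_iff]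
    constructor
    · rintro ⟨-, rfl | rfl⟩
      · exact ⟨u, .inl ⟨rfl, rfl⟩⟩
      · exact ⟨v, .inr ⟨rfl, rfl⟩⟩
    · rintro ⟨i, ⟨rfl, rfl⟩ | ⟨rfl, rfl⟩⟩
      · exact ⟨(Fin.add_one_ne_self hn i).symm, .inl rfl⟩
      · exact ⟨Fin.add_one_ne_self hn i, .inr rfl⟩

theorem mk_add_one_injective (hn : 3 ≤ n) : Function.Injective fun i : Fin n => s(i, i + 1) := by
  intro i j h
  rcases Sym2.eq_iff.mp h with ⟨h, -⟩ | ⟨h₁, h₂⟩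
  · exact h
  · have := i.val_add_one_cases
    have := j.val_add_one_cases
    have := congrArg Fin.val h₁
    have := congrArg Fin.val h₂
    omega

theorem stdCycle_eq_cycleGraph (hn : 2 ≤ n) : stdCycle n = SimpleGraph.cycleGraph n := by
  obtain ⟨m, rfl⟩ := Nat.exists_eq_add_of_le' hn
  ext u v
  rw [SimpleGraph.cycleGraph_adj, stdCycle, SimpleGraph.fromRel_adj, sub_eq_iff_eq_add',
    sub_eq_iff_eq_add', or_comm]
  constructor
  · exact fun h => h.2
  · intro h
    refine ⟨?_, h⟩
    rintro rfl
    exact Fin.add_one_ne_self hn u (h.elim Eq.symm Eq.symm)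

end StdCycle

section HamCycle

variable {n : ℕ}

theorem IsHamCycle.of_iso {G H : SimpleGraph (Fin n)} (φ : G ≃g H) (h : IsHamCycle G) :
    IsHamCycle H := by
  refine ⟨φ.connected_iff.mp h.1, fun v => ?_⟩
  rw [← φ.apply_symm_apply v, ← Nat.card_coe_set_eq, ← Nat.card_congr (φ.mapNeighborSet _),
    Nat.card_coe_set_eq, h.2]

theorem IsHamCycle.image {S : Set (Sym2 (Fin n))} {f : Fin n → Fin n} (hf : f.Bijective)
    (h : IsHamCycle (SimpleGraph.fromEdgeSet S)) :
    IsHamCycle (SimpleGraph.fromEdgeSet (Sym2.map f '' S)) :=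
  h.of_iso ⟨Equiv.ofBijective f hf, fun {u v} => by
    simp [← Sym2.map_mk, (Sym2.map.injective hf.injective).mem_set_image, hf.injective.ne_iff]⟩

theorem stdCycle_isHamCycle [NeZero n] (hn : 3 ≤ n) : IsHamCycle (stdCycle n) := by
  obtain ⟨m, rfl⟩ := Nat.exists_eq_add_of_le' hn
  rw [stdCycle_eq_cycleGraph (by omega)]
  refine ⟨SimpleGraph.cycleGraph_connected, fun v => ?_⟩
  rw [← Nat.card_coe_set_eq, Nat.card_eq_fintype_card, SimpleGraph.card_neighborSet_eq_degree,
    SimpleGraph.cycleGraph_degree_three_le]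

end HamCycle

section Switching

variable {n : ℕ} [NeZero n] {a b : Fin n}

theorem image_edgeSet_stdCycle_blockRev (hn : 3 ≤ n) (hab : a < b) :
    Sym2.map (blockRev a b) '' (stdCycle n).edgeSet =
      (stdCycle n).edgeSet \ {s(a, a + 1), s(b, b + 1)} ∪ {s(a, b), s(a + 1, b + 1)} := by
  have hba : b ≠ a := hab.ne'
  have hinj := mk_add_one_injective hn
  have ha : Sym2.map (blockRev a b) s(a, a + 1) = s(a, b) := by
    rw [Sym2.map_mk, blockRev_of_notMem (by omega), blockRev_add_one_left hab]
  have hb : Sym2.map (blockRev a b) s(b, b + 1) = s(a + 1, b + 1) := by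
    rw [Sym2.map_mk, blockRev_right hab, blockRev_add_one_of_notMem_Ico (by simp)]
  rw [edgeSet_stdCycle (by omega)]
  ext e
  simp only [Set.mem_union, Set.mem_sdiff, Set.mem_insert_iff, Set.mem_singleton_iff,
    Set.mem_image, Set.mem_range]
  constructor
  · rintro ⟨_, ⟨i, rfl⟩, rfl⟩
    by_cases hia : i = a
    · subst hia; exact .inr (.inl ha)
    by_cases hib : i = b
    · subst hib; exact .inr (.inr hb)
    obtain ⟨j, hja, hjb, hj⟩ := exists_map_blockRev_edge hia hib
    exact .inl ⟨⟨j, hj.symm⟩, by rw [hj]; exact not_or.mpr ⟨hinj.ne hja, hinj.ne hjb⟩⟩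
  · rintro (⟨⟨i, rfl⟩, hne⟩ | rfl | rfl)
    · obtain ⟨hia, hib⟩ : i ≠ a ∧ i ≠ b := by
        constructor <;> rintro rfl <;> simp at hne
      obtain ⟨j, -, -, hj⟩ := exists_map_blockRev_edge hia hib
      refine ⟨_, ⟨j, rfl⟩, ?_⟩
      rw [← hj, Sym2.map_map, (blockRev_involutive a b).comp_self, Sym2.map_id, id]
    · exact ⟨_, ⟨a, rfl⟩, ha⟩
    · exact ⟨_, ⟨b, rfl⟩, hb⟩

theorem symmDiff_edgeSet_stdCycle_C4 (hn : 3 ≤ n) (hab : a < b) (hb : b ≠ a + 1)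
    (ha : a ≠ b + 1) :
    symmDiff (stdCycle n).edgeSet (C4 a b) = Sym2.map (blockRev a b) '' (stdCycle n).edgeSet := by
  rw [image_edgeSet_stdCycle_blockRev hn hab]
  convert Set.symmDiff_union_of_subset_of_disjoint (A := (stdCycle n).edgeSet) ?_ ?_ using 2
  · simp only [C4, Set.insert_union, Set.singleton_union]
  · rw [edgeSet_stdCycle (by omega)]
    simp [Set.insert_subset_iff]
  · simp [Set.disjoint_insert_right, stdCycle, hb, ha]

theorem image_C4_blockRev {x y : Fin n} (hx : x ∉ Set.Icc a b) (hy : y ∉ Set.Icc a b) :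
    Sym2.map (blockRev a b) '' C4 x y = C4 x y := by
  have hx' : x ∉ Set.Ico a b := fun h => hx (Set.Ico_subset_Icc_self h)
  have hy' : y ∉ Set.Ico a b := fun h => hy (Set.Ico_subset_Icc_self h)
  simp only [C4, Set.image_insert_eq, Set.image_singleton, Sym2.map_mk,
    blockRev_of_notMem_Icc hx, blockRev_of_notMem_Icc hy,
    blockRev_add_one_of_notMem_Ico hx', blockRev_add_one_of_notMem_Ico hy']

end Switching

section NonCrossing

variable {n : ℕ}

def Compatible (p q : Fin n × Fin n) : Prop :=
  (p.1 ≠ q.1 ∧ p.1 ≠ q.2 ∧ p.2 ≠ q.1 ∧ p.2 ≠ q.2) ∧ ¬Crossing p q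

theorem Compatible.symm {p q : Fin n × Fin n} (h : Compatible p q) : Compatible q p := by
  obtain ⟨⟨h₁, h₂, h₃, h₄⟩, h₅⟩ := h
  refine ⟨⟨h₁.symm, h₃.symm, h₂.symm, h₄.symm⟩, fun hc => h₅ ?_⟩
  unfold Crossing at hc ⊢
  tauto

theorem Compatible.notMem_Icc {p q : Fin n × Fin n} (h : Compatible p q) (hq : q.1 < q.2)
    (hpq : p.2.val - p.1.val ≤ q.2.val - q.1.val) :
    q.1 ∉ Set.Icc p.1 p.2 ∧ q.2 ∉ Set.Icc p.1 p.2 := by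
  obtain ⟨⟨h₁, h₂, h₃, h₄⟩, h₅⟩ := h
  simp only [Crossing, Set.mem_Icc, ne_eq, Fin.ext_iff] at *
  omega

theorem exists_innermost {L : List (Fin n × Fin n)} (hlt : ∀ p ∈ L, p.1 < p.2)
    (hpair : L.Pairwise Compatible) (hL : L ≠ []) :
    ∃ p ∈ L, ∀ q ∈ L.erase p, q.1 ∉ Set.Icc p.1 p.2 ∧ q.2 ∉ Set.Icc p.1 p.2 := by
  obtain ⟨p, hp, hmin⟩ := L.toFinset.exists_min_image (fun p => p.2.val - p.1.val)
    (List.toFinset_nonempty_iff L |>.mpr hL)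
  rw [List.mem_toFinset] at hp
  refine ⟨p, hp, fun q hq => ?_⟩
  have hcons := (List.perm_cons_erase hp).pairwise_iff Compatible.symm |>.mp hpair
  have hqL := List.mem_of_mem_erase hq
  exact (List.rel_of_pairwise_cons hcons hq).notMem_Icc (hlt q hqL)
    (hmin q (List.mem_toFinset.mpr hqL))

end NonCrossing

theorem isHamCycle_symmDiffList_C4 {n : ℕ} [NeZero n] (hn : 3 ≤ n) (L : List (Fin n × Fin n))
    (hlt : ∀ p ∈ L, p.1 < p.2) (hsep : ∀ p ∈ L, p.2 ≠ p.1 + 1 ∧ p.1 ≠ p.2 + 1)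
    (hpair : L.Pairwise Compatible) :
    IsHamCycle (SimpleGraph.fromEdgeSet
      (symmDiffList (stdCycle n).edgeSet (L.map fun p => C4 p.1 p.2))) := by
  rcases eq_or_ne L [] with rfl | hL
  · simpa [symmDiffList] using stdCycle_isHamCycle hn
  obtain ⟨p, hp, hout⟩ := exists_innermost hlt hpair hL
  have ih := isHamCycle_symmDiffList_C4 hn (L.erase p)
    (fun q hq => hlt q (List.mem_of_mem_erase hq)) (fun q hq => hsep q (List.mem_of_mem_erase hq))
    (hpair.sublist List.erase_sublist)
  have hfix : (L.erase p).map (fun q => C4 q.1 q.2) =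
      ((L.erase p).map fun q => C4 q.1 q.2).map (Sym2.map (blockRev p.1 p.2) '' ·) := by
    rw [List.map_map]
    exact List.map_congr_left fun q hq => (image_C4_blockRev (hout q hq).1 (hout q hq).2).symm
  rw [symmDiffList_perm ((List.perm_cons_erase hp).map _), List.map_cons, symmDiffList,
    symmDiff_edgeSet_stdCycle_C4 hn (hlt p hp) (hsep p hp).1 (hsep p hp).2, hfix,
    ← image_symmDiffList (Sym2.map.injective (blockRev_involutive _ _).injective)]
  exact ih.image (blockRev_involutive _ _).bijective
termination_by L.length
decreasing_by
  rw [List.length_erase_of_mem hp]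
  exact Nat.sub_lt (List.length_pos_of_mem hp) one_pos

/-- if `C_1, …, C_r` are 4-cycles correctly embedded in the Hamilton cycle
`H = 0 1 ⋯ (n-1) 0` (using disjoint pairs of edges of `H`), no two of which are crossing
relative to `H`, then `E(H) △ E(C_1) △ ⋯ △ E(C_r)` is a Hamilton cycle. -/
theorem stmt_13 (n : ℕ) [NeZero n] (hn : 3 ≤ n) (L : List (Fin n × Fin n))
    (hlt : ∀ p ∈ L, p.1 < p.2)
    (hvx : ∀ p ∈ L, List.Pairwise (· ≠ ·) [p.1, p.1 + 1, p.2, p.2 + 1])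
    (hpair : L.Pairwise (fun p q =>
      (p.1 ≠ q.1 ∧ p.1 ≠ q.2 ∧ p.2 ≠ q.1 ∧ p.2 ≠ q.2) ∧ ¬ Crossing p q)) :
    IsHamCycle (SimpleGraph.fromEdgeSet
      (symmDiffList (stdCycle n).edgeSet (L.map (fun p => C4 p.1 p.2)))) := by
  refine isHamCycle_symmDiffList_C4 hn L hlt (fun p hp => ?_) hpair
  have h := hvx p hp
  simp only [List.pairwise_cons, List.mem_cons, List.not_mem_nil, forall_eq_or_imp] at h
  exact ⟨h.2.1.1.symm, h.1.2.2.1⟩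
end

section
/- Let w be an integer edge weighting of K_n with n > 65k + 3 (k ∈ ℚ, k ≥ 0) such that Σ_{C ∈ C_n} bal(C) ≤ k·n³. Then there exist integers (λ_v)_{v ∈ V(K_n)} and β ∈ ℤ such that the weighting w*(uv) := w(uv) + λ_u + λ_v + β satisfies w*(e) = 0 for all but at most 32k(n+1) edges e of K_n. -/
/-!
For distinct vertices `a, b`, the balances `|w(ax) + w(yb) - w(ay) - w(xb)|` measure how far
`x ↦ w(xa) - w(xb)` is from constant, and the balances `|w(uv) + w(ab) - w(ua) - w(vb)|` how far
`w(uv)` is from `w(ua) + w(vb) - w(ab)`. Averaging over all pairs yields a pair `a, b` for which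
both totals are small. Let `D` be the most frequent value of `w(xa) - w(xb)`. Then
`λ_u = -w(ua)` (`λ_a = -D - w(ab)`), `β = D + w(ab)` make `w*` vanish on every edge except those
at a vertex `x` with `w(xa) - w(xb) ≠ D` and those `uv` with `w(uv) + w(ab) ≠ w(ua) + w(vb)`,
and counting them gives `(n - 2)·#exceptions ≤ 16kn² ≤ 32k(n + 1)(n - 2)` for `n ≥ 4`.
-/

open Finset

/-- Eight times the total balance `Σ_{C ∈ C_n} bal(C)` over all (unordered) 4-cycles of
`K_n`: each unordered 4-cycle `v1 v2 v3 v4 v1` corresponds to exactly 8 ordered quadruples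
of distinct vertices on which `|w(v1v2)+w(v3v4)−w(v1v3)−w(v2v4)|` takes the value
`bal` of one of the three 4-cycles on those four vertices, each appearing 8 times. -/
def totalBal8 {n : ℕ} (w : Sym2 (Fin n) → ℤ) : ℤ :=
  ∑ v1 : Fin n, ∑ v2 : Fin n, ∑ v3 : Fin n, ∑ v4 : Fin n,
    if List.Pairwise (· ≠ ·) [v1, v2, v3, v4] then
      |w s(v1, v2) + w s(v3, v4) - w s(v1, v3) - w s(v2, v4)| else 0

lemma Finset.card_filter_ne_zero_le_sum_abs {ι : Type*} (s : Finset ι) (g : ι → ℤ) :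
    (#{i ∈ s | g i ≠ 0} : ℤ) ≤ ∑ i ∈ s, |g i| := by
  rw [Finset.card_filter, Nat.cast_sum]
  refine Finset.sum_le_sum fun i _ => ?_
  split_ifs with h
  · exact_mod_cast Int.one_le_abs h
  · exact_mod_cast abs_nonneg (g i)

/-- `D` is a most frequent value of `f` on `s`. -/
lemma Finset.exists_card_mul_card_filter_ne_le {α β : Type*} [DecidableEq β] [Nonempty β]
    (s : Finset α) (f : α → β) :
    ∃ D, #s * #{x ∈ s | f x ≠ D} ≤ #{p ∈ s ×ˢ s | f p.1 ≠ f p.2} := by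
  rcases s.eq_empty_or_nonempty with rfl | hs
  · exact ⟨Classical.arbitrary β, by simp⟩
  obtain ⟨x₀, -, hx₀⟩ := s.exists_max_image (fun x => #{y ∈ s | f y = f x}) hs
  refine ⟨f x₀, ?_⟩
  have hfiber : ∀ x ∈ s, #{y ∈ s | f y ≠ f x₀} ≤ #{y ∈ s | f x ≠ f y} := by
    intro x hx
    have h₀ := s.card_filter_add_card_filter_not (fun y => f y = f x₀)
    have h₁ := s.card_filter_add_card_filter_not (fun y => f y = f x)
    have h₂ := hx₀ x hx
    simp only [ne_comm (a := f x), ne_eq] at h₀ h₁ ⊢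
    omega
  calc #s * #{x ∈ s | f x ≠ f x₀} = ∑ x ∈ s, #{y ∈ s | f y ≠ f x₀} := by
        rw [Finset.sum_const, smul_eq_mul]
    _ ≤ ∑ x ∈ s, #{y ∈ s | f x ≠ f y} := Finset.sum_le_sum hfiber
    _ = #{p ∈ s ×ˢ s | f p.1 ≠ f p.2} := by
        simp only [Finset.card_filter, Finset.sum_product]

section Balance

variable {n : ℕ} (w : Sym2 (Fin n) → ℤ)

def quadBal (v₁ v₂ v₃ v₄ : Fin n) : ℤ :=
  if List.Pairwise (· ≠ ·) [v₁, v₂, v₃, v₄] then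
    |w s(v₁, v₂) + w s(v₃, v₄) - w s(v₁, v₃) - w s(v₂, v₄)| else 0

def balSum₁₄ (a b : Fin n) : ℤ := ∑ x, ∑ y, quadBal w a x y b

def balSum₃₄ (a b : Fin n) : ℤ := ∑ u, ∑ v, quadBal w u v a b

lemma quadBal_nonneg (v₁ v₂ v₃ v₄ : Fin n) : 0 ≤ quadBal w v₁ v₂ v₃ v₄ := by
  unfold quadBal
  split_ifs
  exacts [abs_nonneg _, le_rfl]

lemma quadBal_of_ne {v₁ v₂ v₃ v₄ : Fin n} (h₁₂ : v₁ ≠ v₂) (h₁₃ : v₁ ≠ v₃) (h₁₄ : v₁ ≠ v₄)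
    (h₂₃ : v₂ ≠ v₃) (h₂₄ : v₂ ≠ v₄) (h₃₄ : v₃ ≠ v₄) :
    quadBal w v₁ v₂ v₃ v₄ = |w s(v₁, v₂) + w s(v₃, v₄) - w s(v₁, v₃) - w s(v₂, v₄)| :=
  if_pos (by simp [h₁₂, h₁₃, h₁₄, h₂₃, h₂₄, h₃₄])

lemma quadBal_self_mid (v₁ v₂ v₄ : Fin n) : quadBal w v₁ v₂ v₂ v₄ = 0 :=
  if_neg (by simp)

lemma sum_balSum₁₄ : ∑ a, ∑ b, balSum₁₄ w a b = totalBal8 w := by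
  unfold totalBal8 balSum₁₄
  refine Finset.sum_congr rfl fun a _ => ?_
  rw [Finset.sum_comm]
  exact Finset.sum_congr rfl fun x _ => Finset.sum_comm

lemma sum_balSum₃₄ : ∑ a, ∑ b, balSum₃₄ w a b = totalBal8 w := by
  unfold totalBal8 balSum₃₄
  calc ∑ a, ∑ b, ∑ u, ∑ v, quadBal w u v a b
      = ∑ a, ∑ u, ∑ b, ∑ v, quadBal w u v a b := Finset.sum_congr rfl fun _ _ => Finset.sum_comm
    _ = ∑ u, ∑ a, ∑ v, ∑ b, quadBal w u v a b := by
        rw [Finset.sum_comm]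
        exact Finset.sum_congr rfl fun _ _ => Finset.sum_congr rfl fun _ _ => Finset.sum_comm
    _ = ∑ u, ∑ v, ∑ a, ∑ b, quadBal w u v a b := Finset.sum_congr rfl fun _ _ => Finset.sum_comm

/-- Averaging: over the `n(n-1)` pairs of distinct vertices, `n·balSum₁₄ + (n-2)·balSum₃₄`
sums to at most `(2n-2)·totalBal8`. -/
lemma exists_pair_mul_balSum_le (hn : 2 ≤ n) : ∃ a b : Fin n, a ≠ b ∧
    n * (n * balSum₁₄ w a b + (n - 2) * balSum₃₄ w a b) ≤ 2 * totalBal8 w := by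
  set X : Fin n × Fin n → ℤ := fun p => n * balSum₁₄ w p.1 p.2 + (n - 2) * balSum₃₄ w p.1 p.2
  have hX : ∀ p, 0 ≤ X p := fun p => add_nonneg
    (mul_nonneg (by positivity) (Finset.sum_nonneg fun _ _ => Finset.sum_nonneg fun _ _ =>
      quadBal_nonneg w _ _ _ _))
    (mul_nonneg (by omega) (Finset.sum_nonneg fun _ _ => Finset.sum_nonneg fun _ _ =>
      quadBal_nonneg w _ _ _ _))
  have hsum : ∑ p, X p = (2 * n - 2) * totalBal8 w := by
    simp only [X, Fintype.sum_prod_type, Finset.sum_add_distrib, ← Finset.mul_sum,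
      sum_balSum₁₄, sum_balSum₃₄]
    ring
  have hcard : ((univ : Finset (Fin n)).offDiag.card : ℤ) = n * (n - 1) := by
    rw [Finset.offDiag_card, Finset.card_univ, Fintype.card_fin,
      Nat.cast_sub (Nat.le_mul_self n)]
    push_cast
    ring
  have hne : (univ : Finset (Fin n)).offDiag.Nonempty :=
    ⟨(⟨0, by omega⟩, ⟨1, by omega⟩), by simp [Fin.ext_iff]⟩
  obtain ⟨⟨a, b⟩, hab, hle⟩ := Finset.exists_le_of_sum_le hne
    (f := fun p => n * X p) (g := fun _ => 2 * totalBal8 w) <| by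
      calc ∑ p ∈ univ.offDiag, n * X p ≤ n * ∑ p, X p := by
            rw [← Finset.mul_sum]
            gcongr
            · exact fun p _ _ => hX p
            · exact Finset.subset_univ _
        _ = ∑ _p ∈ univ.offDiag, 2 * totalBal8 w := by
            rw [hsum, Finset.sum_const, nsmul_eq_mul, hcard]
            ring
  exact ⟨a, b, (Finset.mem_offDiag.mp hab).2.2, hle⟩

end Balance

section Repair

variable {n : ℕ} (w : Sym2 (Fin n) → ℤ) (a b : Fin n) (D : ℤ)

def unbalancedPairs : Finset (Fin n × Fin n) := {p | quadBal w p.1 p.2 a b ≠ 0}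

def atypicalVertices : Finset (Fin n) := {x ∈ {a, b}ᶜ | w s(x, a) - w s(x, b) ≠ D}

def exceptionalEdges : Finset (Sym2 (Fin n)) :=
  (unbalancedPairs w a b).image (fun p => s(p.1, p.2)) ∪
    (atypicalVertices w a b D ×ˢ univ).image (fun p => s(p.1, p.2))

/-- With the shift `β = D + w(ab)`, this makes every edge at `a` vanish, and every edge `xb`
with `w(xa) - w(xb) = D`. -/
def potential (u : Fin n) : ℤ := if u = a then -D - w s(a, b) else -w s(u, a)

lemma card_unbalancedPairs_le : (#(unbalancedPairs w a b) : ℤ) ≤ balSum₃₄ w a b := by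
  calc (#(unbalancedPairs w a b) : ℤ) ≤ ∑ p : Fin n × Fin n, |quadBal w p.1 p.2 a b| :=
        Finset.card_filter_ne_zero_le_sum_abs _ _
    _ = balSum₃₄ w a b := by
        simp only [abs_of_nonneg (quadBal_nonneg w _ _ _ _), Fintype.sum_prod_type, balSum₃₄]

variable {a b}

lemma abs_sub_eq_quadBal (hab : a ≠ b) {x y : Fin n} (hx : x ∉ ({a, b} : Finset (Fin n)))
    (hy : y ∉ ({a, b} : Finset (Fin n))) :
    |(w s(x, a) - w s(x, b)) - (w s(y, a) - w s(y, b))| = quadBal w a x y b := by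
  simp only [Finset.mem_insert, Finset.mem_singleton, not_or] at hx hy
  obtain rfl | hxy := eq_or_ne x y
  · simp [quadBal_self_mid]
  rw [quadBal_of_ne w (Ne.symm hx.1) (Ne.symm hy.1) hab hxy hx.2 hy.2, Sym2.eq_swap (a := x),
    Sym2.eq_swap (a := y)]
  ring_nf

lemma exists_card_atypicalVertices_le (hab : a ≠ b) :
    ∃ D, ((n : ℤ) - 2) * #(atypicalVertices w a b D) ≤ balSum₁₄ w a b := by
  have hV : (#({a, b}ᶜ : Finset (Fin n)) : ℤ) = n - 2 := by
    have := Finset.card_add_card_compl ({a, b} : Finset (Fin n))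
    rw [Finset.card_pair hab, Fintype.card_fin] at this
    omega
  set V : Finset (Fin n) := {a, b}ᶜ
  set δ : Fin n → ℤ := fun x => w s(x, a) - w s(x, b)
  obtain ⟨D, hD⟩ := Finset.exists_card_mul_card_filter_ne_le V δ
  refine ⟨D, ?_⟩
  calc ((n : ℤ) - 2) * #(atypicalVertices w a b D) = (#V * #{x ∈ V | δ x ≠ D} : ℕ) := by
        rw [Nat.cast_mul, hV]; rfl
    _ ≤ #{p ∈ V ×ˢ V | δ p.1 - δ p.2 ≠ 0} := by
        simp only [sub_ne_zero]
        exact_mod_cast hD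
    _ ≤ ∑ p ∈ V ×ˢ V, |δ p.1 - δ p.2| := Finset.card_filter_ne_zero_le_sum_abs _ _
    _ = ∑ x ∈ V, ∑ y ∈ V, quadBal w a x y b := by
        rw [Finset.sum_product]
        exact Finset.sum_congr rfl fun x hx => Finset.sum_congr rfl fun y hy =>
          abs_sub_eq_quadBal w hab (Finset.mem_compl.mp hx) (Finset.mem_compl.mp hy)
    _ ≤ ∑ x ∈ V, ∑ y, quadBal w a x y b := Finset.sum_le_sum fun _ _ =>
        Finset.sum_le_sum_of_subset_of_nonneg (Finset.subset_univ _) fun _ _ _ =>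
          quadBal_nonneg w _ _ _ _
    _ ≤ balSum₁₄ w a b := Finset.sum_le_sum_of_subset_of_nonneg (Finset.subset_univ _)
        fun _ _ _ => Finset.sum_nonneg fun _ _ => quadBal_nonneg w _ _ _ _

lemma card_exceptionalEdges_le :
    #(exceptionalEdges w a b D) ≤ #(unbalancedPairs w a b) + #(atypicalVertices w a b D) * n :=
  calc #(exceptionalEdges w a b D)
      ≤ #(unbalancedPairs w a b) + #(atypicalVertices w a b D ×ˢ (univ : Finset (Fin n))) :=
        (Finset.card_union_le _ _).trans (add_le_add Finset.card_image_le Finset.card_image_le)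
    _ = #(unbalancedPairs w a b) + #(atypicalVertices w a b D) * n := by
        rw [Finset.card_product, Finset.card_univ, Fintype.card_fin]

lemma add_potential_eq_zero (hab : a ≠ b) {u v : Fin n} (huv : u ≠ v)
    (he : s(u, v) ∉ exceptionalEdges w a b D) :
    w s(u, v) + potential w a b D u + potential w a b D v + (D + w s(a, b)) = 0 := by
  simp only [exceptionalEdges, Finset.mem_union, Finset.mem_image, Finset.mem_product,
    Finset.mem_univ, and_true, Prod.exists, not_or, not_exists, not_and] at he
  have hq : quadBal w u v a b = 0 := by
    by_contra h
    exact he.1 u v (by simp [unbalancedPairs, h]) rfl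
  have htyp : ∀ {x y}, s(x, y) = s(u, v) → x ≠ a → x ≠ b → w s(x, a) - w s(x, b) = D := by
    intro x y hxy hxa hxb
    by_contra h
    exact he.2 x y (by simp [atypicalVertices, hxa, hxb, h]) hxy
  have hswap : ∀ x y, w s(x, y) = w s(y, x) := fun x y => by rw [Sym2.eq_swap]
  unfold potential
  obtain rfl | hua := eq_or_ne u a
  · rw [if_pos rfl, if_neg huv.symm]
    linarith [hswap u v]
  obtain rfl | hva := eq_or_ne v a
  · rw [if_neg hua, if_pos rfl]
    ring
  rw [if_neg hua, if_neg hva]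
  obtain rfl | hub := eq_or_ne u b
  · linarith [hswap u v, hswap u a, htyp Sym2.eq_swap hva huv.symm]
  obtain rfl | hvb := eq_or_ne v b
  · linarith [hswap u v, hswap v a, htyp rfl hua hub]
  have hQ : w s(u, v) + w s(a, b) - w s(u, a) - w s(v, b) = 0 := by
    rwa [quadBal_of_ne w huv hua hub hva hvb hab, abs_eq_zero] at hq
  linarith [hswap u v, htyp Sym2.eq_swap hva hvb]

end Repair

theorem exists_potential_card_mul_le {n : ℕ} (hn : 2 ≤ n) (w : Sym2 (Fin n) → ℤ) :
    ∃ (lam : Fin n → ℤ) (β : ℤ) (S : Finset (Sym2 (Fin n))),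
      n * (n - 2) * (#S : ℤ) ≤ 2 * totalBal8 w ∧
      ∀ u v : Fin n, u ≠ v → s(u, v) ∉ S → w s(u, v) + lam u + lam v + β = 0 := by
  obtain ⟨a, b, hab, hpair⟩ := exists_pair_mul_balSum_le w hn
  obtain ⟨D, hD⟩ := exists_card_atypicalVertices_le w hab
  refine ⟨potential w a b D, D + w s(a, b), exceptionalEdges w a b D, ?_,
    fun u v huv he => add_potential_eq_zero w D hab huv he⟩
  have hS : (#(exceptionalEdges w a b D) : ℤ)
      ≤ #(unbalancedPairs w a b) + #(atypicalVertices w a b D) * n := by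
    exact_mod_cast card_exceptionalEdges_le w D
  have hn2 : (0 : ℤ) ≤ n - 2 := by omega
  calc n * (n - 2) * (#(exceptionalEdges w a b D) : ℤ)
      ≤ n * ((n - 2) * #(unbalancedPairs w a b)
          + n * ((n - 2) * #(atypicalVertices w a b D))) := by
        nlinarith [mul_le_mul_of_nonneg_left hS (mul_nonneg (Int.natCast_nonneg n) hn2)]
    _ ≤ n * ((n - 2) * balSum₃₄ w a b + n * balSum₁₄ w a b) := by
        gcongr
        exact card_unbalancedPairs_le w a b
    _ ≤ 2 * totalBal8 w := by linarith

/-- if `n > 65k + 3` and `Σ_C bal(C) ≤ k·n³`, then there are integers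
`(λ_v)` and `β` such that `w*(uv) = w(uv) + λ_u + λ_v + β` vanishes on all but at most
`32k(n+1)` edges of `K_n`. -/
theorem stmt_15 (n : ℕ) (k : ℚ) (hk : 0 ≤ k) (hn : 65 * k + 3 < (n : ℚ))
    (w : Sym2 (Fin n) → ℤ)
    (hbal : (totalBal8 w : ℚ) ≤ 8 * (k * (n : ℚ) ^ 3)) :
    ∃ (lam : Fin n → ℤ) (β : ℤ) (S : Finset (Sym2 (Fin n))),
      (S.card : ℚ) ≤ 32 * k * ((n : ℚ) + 1) ∧
      ∀ u v : Fin n, u ≠ v → s(u, v) ∉ S →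
        w s(u, v) + lam u + lam v + β = 0 := by
  have hn3 : 3 < n := by exact_mod_cast (show (3 : ℚ) < n by linarith)
  have hn4 : (4 : ℚ) ≤ n := by exact_mod_cast hn3
  obtain ⟨lam, β, S, hS, hzero⟩ := exists_potential_card_mul_le (by omega) w
  refine ⟨lam, β, S, ?_, hzero⟩
  have hcard : (n : ℚ) * ((n - 2) * #S) ≤ n * (16 * k * n ^ 2) := by
    have := (Int.cast_le (R := ℚ)).mpr hS
    push_cast at this
    linarith
  have hquad : 16 * k * n ^ 2 ≤ ((n : ℚ) - 2) * (32 * k * (n + 1)) := by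
    nlinarith [mul_nonneg hk (by nlinarith : (0 : ℚ) ≤ n ^ 2 - 2 * n - 4)]
  exact le_of_mul_le_mul_left ((le_of_mul_le_mul_left hcard (by positivity)).trans hquad)
    (by linarith)
end

section
/- Let G be a spanning subgraph of K_n and let X ⊆ V(K_n). Then G is an (X)-partial Hamilton cycle of K_n (i.e., G can be obtained from some Hamilton cycle of K_n by deleting all its edges having both endpoints outside X) if and only if: (a) G is a vertex-disjoint union of paths (allowing trivial single-vertex paths); (b) every vertex of X is an internal vertex of one of these paths; and (c) G contains no edge with both endpoints in V(K_n) ∖ X. (Assume |V(K_n) ∖ X| is large enough relative to the number of paths, e.g., n ≥ 2|X| + 3.) -/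
open Finset

/-- `G` is an `(X)`-partial Hamilton cycle of `K_n`: it is obtained from some Hamilton
cycle `H` by deleting all edges of `H` having both endpoints outside `X`. -/
def IsXPartial {n : ℕ} (X : Finset (Fin n)) (G : SimpleGraph (Fin n)) : Prop :=
  ∃ H : SimpleGraph (Fin n), IsHamCycle H ∧
    ∀ e : Sym2 (Fin n), e ∈ G.edgeSet ↔ (e ∈ H.edgeSet ∧ ∃ v ∈ e, v ∈ X)

/-!
An `(X)`-partial Hamilton cycle `G` of a Hamilton cycle `H` has maximum degree `2`, keeps both
`H`-edges at every vertex of `X`, and, as each of its edges meets `X`, has at most `2|X| < n`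
edges. It is acyclic because a cycle in the connected `2`-regular graph `H` passes through all
`n` vertices.

Conversely, a linear forest becomes a Hamilton path by repeatedly joining endpoints of two
distinct paths, and then a Hamilton cycle by joining the two ends of that path (a new edge since
`n ≥ 3`). Every added edge joins vertices of degree at most `1`, which lie outside `X`, so deleting
the edges outside `X` recovers `G`.
-/

namespace SimpleGraph
variable {V : Type*} {G H : SimpleGraph V} {u v w : V}

lemma neighborSet_sup_edge_of_ne_of_ne (hu : w ≠ u) (hv : w ≠ v) :
    (G ⊔ edge u v).neighborSet w = G.neighborSet w := by
  ext x; simp [edge_adj, hu, hv]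

lemma neighborSet_sup_edge_left (huv : u ≠ v) :
    (G ⊔ edge u v).neighborSet u = insert v (G.neighborSet u) := by
  ext x; simp only [mem_neighborSet, sup_adj, edge_adj, Set.mem_insert_iff]; grind

lemma ncard_neighborSet_sup_edge [Finite V] [DecidableEq V] (huv : u ≠ v) (hn : ¬G.Adj u v)
    (w : V) :
    ((G ⊔ edge u v).neighborSet w).ncard =
      (G.neighborSet w).ncard + if w = u ∨ w = v then 1 else 0 := by
  by_cases hwu : w = u
  · subst hwu
    rw [neighborSet_sup_edge_left huv, Set.ncard_insert_of_notMem (s := G.neighborSet _) hn,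
      if_pos (.inl rfl)]
  by_cases hwv : w = v
  · subst hwv
    rw [edge_comm, neighborSet_sup_edge_left (Ne.symm huv),
      Set.ncard_insert_of_notMem (s := G.neighborSet _) (fun h => hn h.symm), if_pos (.inr rfl)]
  rw [neighborSet_sup_edge_of_ne_of_ne hwu hwv, if_neg (by tauto), add_zero]

lemma ncard_neighborSet_eq_degree [Fintype V] [DecidableRel G.Adj] (v : V) :
    (G.neighborSet v).ncard = G.degree v := by
  rw [Set.ncard_eq_toFinset_card', Set.toFinset_card, card_neighborSet_eq_degree]

lemma IsTree.exists_leaves_of_ncard_neighborSet_le_two [Finite V] (hT : G.IsTree)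
    (h3 : 3 ≤ Nat.card V) (hdeg : ∀ v, (G.neighborSet v).ncard ≤ 2) :
    ∃ u v, u ≠ v ∧ ¬G.Adj u v ∧ (G.neighborSet u).ncard = 1 ∧ (G.neighborSet v).ncard = 1 ∧
      ∀ w, w ≠ u → w ≠ v → (G.neighborSet w).ncard = 2 := by
  classical
  have := Fintype.ofFinite V
  rw [Nat.card_eq_fintype_card] at h3
  have : Nontrivial V := Fintype.one_lt_card_iff_nontrivial.mp (by omega)
  obtain ⟨u, v, huv, hu, hv⟩ := hT.exists_ne_and_degree_eq_one
  simp only [ncard_neighborSet_eq_degree] at hdeg ⊢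
  have hsum : ∑ w, G.degree w = 2 * (Fintype.card V - 1) := by
    rw [G.sum_degrees_eq_twice_card_edges, ← hT.card_edgeFinset, Nat.add_sub_cancel]
  -- the `n - 2` remaining vertices share a total degree of `2 (n - 2)`, each at most `2`
  have hinner : ∀ w ∈ ({u, v} : Finset V)ᶜ, G.degree w = 2 := by
    by_contra! ⟨w, hw, hw2⟩
    have hlt : ∑ x ∈ ({u, v} : Finset V)ᶜ, G.degree x < ∑ x ∈ ({u, v} : Finset V)ᶜ, 2 :=
      sum_lt_sum (fun x _ => hdeg x) ⟨w, hw, (hdeg w).lt_of_ne hw2⟩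
    rw [← sum_compl_add_sum {u, v}, sum_pair huv, hu, hv] at hsum
    simp only [sum_const, card_compl, card_pair huv, smul_eq_mul] at hlt
    omega
  refine ⟨u, v, huv, fun hadj => ?_, hu, hv, fun w hwu hwv => hinner w (by simp [hwu, hwv])⟩
  -- a path from a third vertex to `v` enters `v` through its only neighbour `u`, a leaf
  obtain ⟨w, hw⟩ : ({u, v}ᶜ : Finset V).Nonempty := by
    rw [← card_pos, card_compl, card_pair huv]; omega
  simp only [mem_compl, mem_insert, mem_singleton, not_or] at hw
  obtain ⟨p, hp⟩ := hT.connected.preconnected.exists_isPath w v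
  have hnil : ¬p.Nil := Walk.not_nil_of_ne hw.2
  have hpen : p.penultimate = u :=
    (degree_eq_one_iff_existsUnique_adj.mp hv).unique (p.adj_penultimate hnil).symm hadj.symm
  have hleaf : (G.neighborSet u).Subsingleton := by
    obtain ⟨x, hx⟩ := Set.ncard_eq_one.mp ((ncard_neighborSet_eq_degree u).trans hu)
    exact hx ▸ Set.subsingleton_singleton
  exact hp.isTrail.not_mem_support_of_subsingleton_neighborSet (Ne.symm hw.1) huv hleaf
    (hpen ▸ p.getVert_mem_support _)

lemma IsAcyclic.exists_reachable_ncard_neighborSet_le_one [Finite V] (hG : G.IsAcyclic) (u : V) :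
    ∃ w, G.Reachable u w ∧ (G.neighborSet w).ncard ≤ 1 := by
  classical
  have := Fintype.ofFinite V
  have : Nonempty (Σ w, G.Path u w) := ⟨⟨u, Path.nil⟩⟩
  obtain ⟨⟨w, p, hp⟩, hmax⟩ := Finite.exists_max fun q : Σ w, G.Path u w => q.2.1.length
  -- a longest path from `u` cannot be extended, so every neighbour of its end is on it
  have hnbr : ∀ x, G.Adj w x → x = p.penultimate := fun x hx =>
    hG.eq_penultimate_of_adj_end hp hx <| by
      by_contra hxp
      exact (hmax ⟨x, p.concat hx, hp.concat hxp hx⟩).not_gt (by simp)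
  exact ⟨w, p.reachable, (Set.ncard_le_one (Set.toFinite _)).mpr fun a ha b hb =>
    (hnbr a ha).trans (hnbr b hb).symm⟩

lemma IsTree.exists_le_connected_ncard_neighborSet_eq_two [Finite V] (hT : G.IsTree)
    (h3 : 3 ≤ Nat.card V) (hdeg : ∀ v, (G.neighborSet v).ncard ≤ 2) :
    ∃ H, G ≤ H ∧ H.Connected ∧ (∀ v, (H.neighborSet v).ncard = 2) ∧
      ∀ a b, H.Adj a b → ¬G.Adj a b → (G.neighborSet a).ncard ≤ 1 := by
  classical
  obtain ⟨u, v, huv, hnadj, hu, hv, hinner⟩ :=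
    hT.exists_leaves_of_ncard_neighborSet_le_two h3 hdeg
  refine ⟨G ⊔ edge u v, le_sup_left, hT.connected.mono le_sup_left, fun w => ?_,
    fun a b hab hnab => ?_⟩
  · rw [ncard_neighborSet_sup_edge huv hnadj]
    by_cases hwu : w = u
    · simp [hwu, hu]
    by_cases hwv : w = v
    · simp [hwv, hv]
    simp [hwu, hwv, hinner w hwu hwv]
  · rw [sup_adj, edge_adj] at hab
    obtain h | ⟨⟨rfl, rfl⟩ | ⟨rfl, rfl⟩, -⟩ := hab
    · exact absurd h hnab
    · exact hu.le
    · exact hv.le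

theorem IsAcyclic.exists_le_connected_ncard_neighborSet_eq_two [Finite V] (h3 : 3 ≤ Nat.card V)
    (hG : G.IsAcyclic) (hdeg : ∀ v, (G.neighborSet v).ncard ≤ 2) :
    ∃ H, G ≤ H ∧ H.Connected ∧ (∀ v, (H.neighborSet v).ncard = 2) ∧
      ∀ a b, H.Adj a b → ¬G.Adj a b → (G.neighborSet a).ncard ≤ 1 := by
  classical
  induction G using WellFoundedGT.induction with
  | _ G ih =>
  by_cases hconn : G.Connected
  · exact IsTree.exists_le_connected_ncard_neighborSet_eq_two ⟨hconn, hG⟩ h3 hdeg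
  obtain ⟨u, v, huv⟩ : ∃ u v, ¬G.Reachable u v := by
    by_contra! h
    have : Nonempty V := Finite.card_pos_iff.mp (by omega)
    exact hconn ⟨h⟩
  obtain ⟨u', hu, hu'⟩ := hG.exists_reachable_ncard_neighborSet_le_one u
  obtain ⟨v', hv, hv'⟩ := hG.exists_reachable_ncard_neighborSet_le_one v
  have hnr : ¬G.Reachable u' v' := fun h => huv (hu.trans (h.trans hv.symm))
  have hne : u' ≠ v' := fun h => hnr (h ▸ .rfl)
  have hnadj : ¬G.Adj u' v' := fun h => hnr h.reachable
  have hdeg' : ∀ w, ((G ⊔ edge u' v').neighborSet w).ncard ≤ 2 := fun w => by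
    rw [ncard_neighborSet_sup_edge hne hnadj]
    by_cases hwu : w = u'
    · simp only [hwu, true_or, if_true]; omega
    by_cases hwv : w = v'
    · simp only [hwv, or_true, if_true]; omega
    simp only [hwu, hwv, or_self, if_false]; exact hdeg w
  obtain ⟨H, hle, hH, hreg, hnew⟩ :=
    ih _ (lt_sup_edge _ _ _ hne hnadj) (hG.sup_edge_of_not_reachable hnr) hdeg'
  refine ⟨H, le_sup_left.trans hle, hH, hreg, fun a b hab hnab => ?_⟩
  by_cases hab' : (G ⊔ edge u' v').Adj a b
  · rw [sup_adj, edge_adj] at hab'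
    obtain h | ⟨⟨rfl, rfl⟩ | ⟨rfl, rfl⟩, -⟩ := hab'
    · exact absurd h hnab
    · exact hu'
    · exact hv'
  · exact (Set.ncard_le_ncard (neighborSet_mono le_sup_left a)).trans (hnew a b hab hab')

lemma Connected.mem_support_of_isCycle [Finite V] (hH : H.Connected) (hcyc : H.IsCycles)
    {c : H.Walk u u} (hc : c.IsCycle) (w : V) : w ∈ c.support := by
  have := Fintype.ofFinite V
  classical
  -- a cycle in a disjoint union of cycles uses every edge at each of its vertices
  obtain ⟨C, hC⟩ := c.toSubgraph_connected.exists_verts_eq_connectedComponentSupp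
    fun v hv x hx => (hc.adj_toSubgraph_iff_of_isCycles hcyc hv x).mpr hx
  have : Subsingleton H.ConnectedComponent := hH.preconnected.subsingleton_connectedComponent
  rw [← c.mem_verts_toSubgraph, hC, ConnectedComponent.mem_supp_iff, Subsingleton.elim C]

lemma Walk.card_le_length_of_forall_mem_support [Fintype V] {c : G.Walk u u} (hc : ¬c.Nil)
    (h : ∀ w, w ∈ c.support) : Fintype.card V ≤ c.length := by
  have htail : ∀ w, w ∈ c.support.tail := fun w => by
    rcases eq_or_ne w u with rfl | hw
    · exact c.end_mem_tail_support hc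
    · exact (List.mem_cons.mp (c.cons_tail_support ▸ h w)).resolve_left hw
  classical
  calc Fintype.card V = #(univ : Finset V) := card_univ.symm
    _ ≤ #c.support.tail.toFinset := card_le_card fun w _ => List.mem_toFinset.mpr (htail w)
    _ ≤ c.support.tail.length := List.toFinset_card_le _
    _ = c.length := by simp

lemma card_edgeFinset_le_sum_ncard_neighborSet [Fintype V] [DecidableRel G.Adj] (X : Finset V)
    (hX : ∀ e ∈ G.edgeSet, ∃ v ∈ e, v ∈ X) :
    #G.edgeFinset ≤ ∑ x ∈ X, (G.neighborSet x).ncard := by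
  classical
  calc #G.edgeFinset ≤ #(X.biUnion fun x => G.incidenceFinset x) := card_le_card fun e he => by
        obtain ⟨x, hxe, hx⟩ := hX e (mem_edgeFinset.mp he)
        exact mem_biUnion.mpr ⟨x, hx, (mem_incidenceFinset ..).mpr ⟨mem_edgeFinset.mp he, hxe⟩⟩
    _ ≤ ∑ x ∈ X, #(G.incidenceFinset x) := card_biUnion_le
    _ = ∑ x ∈ X, (G.neighborSet x).ncard := by
        simp only [card_incidenceFinset_eq_degree, ncard_neighborSet_eq_degree]

theorem isAcyclic_of_le_of_card_edgeFinset_lt [Fintype V] [DecidableRel G.Adj]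
    (hH : H.Connected) (hcyc : H.IsCycles) (hle : G ≤ H)
    (hlt : #G.edgeFinset < Fintype.card V) : G.IsAcyclic := by
  intro u c hc
  have hc' : (c.mapLe hle).IsCycle := (Walk.isCycle_mapLe hle).mpr hc
  have hcover := Walk.card_le_length_of_forall_mem_support hc'.not_nil
    (hH.mem_support_of_isCycle hcyc hc')
  have := hc.isTrail.length_le_card_edgeFinset
  simp only [Walk.length_mapLe] at hcover
  omega

end SimpleGraph

open SimpleGraph

section PartialHamCycle

variable {n : ℕ} {X : Finset (Fin n)} {G : SimpleGraph (Fin n)}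

lemma IsXPartial.exists_mem_of_mem_edgeSet (hG : IsXPartial X G) {e : Sym2 (Fin n)}
    (he : e ∈ G.edgeSet) : ∃ v ∈ e, v ∈ X := by
  obtain ⟨H, -, hGH⟩ := hG
  exact ((hGH e).mp he).2

lemma IsXPartial.ncard_neighborSet_le_two (hG : IsXPartial X G) (v : Fin n) :
    (G.neighborSet v).ncard ≤ 2 := by
  obtain ⟨H, ⟨-, hreg⟩, hGH⟩ := hG
  have hle : G ≤ H := fun a b hab => ((hGH s(a, b)).mp hab).1
  exact (Set.ncard_le_ncard (neighborSet_mono hle v)).trans (hreg v).le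

lemma IsXPartial.ncard_neighborSet_eq_two (hG : IsXPartial X G) {x : Fin n} (hx : x ∈ X) :
    (G.neighborSet x).ncard = 2 := by
  obtain ⟨H, ⟨-, hreg⟩, hGH⟩ := hG
  have : G.neighborSet x = H.neighborSet x := Set.ext fun y =>
    (hGH s(x, y)).trans ⟨And.left, fun hy => ⟨hy, x, Sym2.mem_mk_left x y, hx⟩⟩
  rw [this, hreg]

lemma IsXPartial.isAcyclic (hG : IsXPartial X G) (hn : 2 * #X < n) : G.IsAcyclic := by
  classical
  have hcard : #G.edgeFinset < Fintype.card (Fin n) := calc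
    #G.edgeFinset ≤ ∑ x ∈ X, (G.neighborSet x).ncard :=
        card_edgeFinset_le_sum_ncard_neighborSet X fun e => hG.exists_mem_of_mem_edgeSet
    _ ≤ ∑ _x ∈ X, 2 := sum_le_sum fun x _ => hG.ncard_neighborSet_le_two x
    _ < Fintype.card (Fin n) := by simpa [mul_comm] using hn
  obtain ⟨H, ⟨hH, hreg⟩, hGH⟩ := hG
  have hle : G ≤ H := fun a b hab => ((hGH s(a, b)).mp hab).1
  exact isAcyclic_of_le_of_card_edgeFinset_lt hH (fun v _ => hreg v) hle hcard

lemma isXPartial_of_isAcyclic (h3 : 3 ≤ n) (hac : G.IsAcyclic)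
    (hdeg : ∀ v, (G.neighborSet v).ncard ≤ 2) (hX : ∀ x ∈ X, (G.neighborSet x).ncard = 2)
    (hmeet : ∀ e ∈ G.edgeSet, ∃ v ∈ e, v ∈ X) : IsXPartial X G := by
  obtain ⟨H, hle, hH, hreg, hnew⟩ :=
    hac.exists_le_connected_ncard_neighborSet_eq_two (by simpa using h3) hdeg
  have hout : ∀ a b, H.Adj a b → ¬G.Adj a b → a ∉ X := fun a b hab hnab ha => by
    have := hnew a b hab hnab
    have := hX a ha
    omega
  refine ⟨H, ⟨hH, hreg⟩, Sym2.ind fun a b => ⟨fun h => ⟨hle h, hmeet _ h⟩, ?_⟩⟩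
  rintro ⟨hab, x, hx, hxX⟩
  by_contra hnab
  rcases Sym2.mem_iff.mp hx with rfl | rfl
  · exact hout _ _ hab hnab hxX
  · exact hout _ _ hab.symm (fun h => hnab h.symm) hxX

end PartialHamCycle

/-- `G` is an `(X)`-partial Hamilton cycle iff (a) `G` is a disjoint union
of paths, (b) every vertex of `X` is an internal vertex (degree 2) of one of them, and
(c) `G` has no edge with both endpoints outside `X` (assuming `n ≥ 2|X| + 3`). -/
theorem stmt_17 (n : ℕ) (X : Finset (Fin n)) (hn : 2 * X.card + 3 ≤ n)
    (G : SimpleGraph (Fin n)) :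
    IsXPartial X G ↔
      (G.IsAcyclic ∧ ∀ v, (G.neighborSet v).ncard ≤ 2) ∧
      (∀ x ∈ X, (G.neighborSet x).ncard = 2) ∧
      (∀ e ∈ G.edgeSet, ∃ v ∈ e, v ∈ X) := by
  constructor
  · intro hG
    exact ⟨⟨hG.isAcyclic (by omega), hG.ncard_neighborSet_le_two⟩,
      fun _ => hG.ncard_neighborSet_eq_two, fun _ => hG.exists_mem_of_mem_edgeSet⟩
  · rintro ⟨⟨hac, hdeg⟩, hX, hmeet⟩
    exact isXPartial_of_isAcyclic (by omega) hac hdeg hX hmeet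
end

section
/- Let w be an integer edge weighting of K_n such that every 4-cycle of K_n is balanced (w(x_1x_2)+w(x_3x_4) = w(x_2x_3)+w(x_4x_1) for every 4-cycle x_1x_2x_3x_4x_1). Then there exist rationals (λ_v)_{v ∈ V(K_n)} (integers if n ≥ 5, or half-integers) such that w(uv) = λ_u + λ_v for all edges uv; consequently all Hamilton cycles of K_n have the same weight 2Σ_v λ_v. -/
/-!
If `w(uv) = λ_u + λ_v`, then `λ_u` can be read off any triangle `uxy` as
`(w(ux) + w(uy) - w(xy)) / 2`. Balance of the 4-cycle `u y x z` says exactly that this value does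
not change when `y` is replaced by `z`, so it depends on `u` alone; taking it as `λ_u`, the
identity `w(uv) = λ_u + λ_v` is read off the two triangles `uvx` and `vux`. A Hamilton cycle is
2-regular, so summing `λ_u + λ_v` over its edges counts every `λ_v` twice.
-/

open Finset

section Potential

variable {V K : Type*} [Field K]

def AllFourCyclesBalanced (w : Sym2 V → K) : Prop :=
  ∀ x y z t : V, [x, y, z, t].Pairwise (· ≠ ·) → w s(x, y) + w s(z, t) = w s(y, z) + w s(t, x)

def trianglePotential (w : Sym2 V → K) (u x y : V) : K :=
  (w s(u, x) + w s(u, y) - w s(x, y)) / 2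

theorem trianglePotential_comm (w : Sym2 V → K) (u x y : V) :
    trianglePotential w u x y = trianglePotential w u y x := by
  rw [trianglePotential, trianglePotential, Sym2.eq_swap (a := x), add_comm (w s(u, x))]

theorem trianglePotential_add_trianglePotential [NeZero (2 : K)] (w : Sym2 V → K) (u v x : V) :
    trianglePotential w u v x + trianglePotential w v u x = w s(u, v) := by
  rw [trianglePotential, trianglePotential, Sym2.eq_swap (a := v) (b := u), ← add_div,
    div_eq_iff two_ne_zero]
  ring

namespace AllFourCyclesBalanced

variable {w : Sym2 V → K}

theorem trianglePotential_eq (hw : AllFourCyclesBalanced w) {u x y z : V}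
    (hux : u ≠ x) (huy : u ≠ y) (huz : u ≠ z) (hxy : x ≠ y) (hxz : x ≠ z) :
    trianglePotential w u x y = trianglePotential w u x z := by
  rcases eq_or_ne y z with rfl | hyz
  · rfl
  have h := hw u y x z (by simp [*, hxy.symm])
  rw [Sym2.eq_swap (a := y), Sym2.eq_swap (a := z)] at h
  rw [trianglePotential, trianglePotential]
  linear_combination h / 2

theorem trianglePotential_eq_of_ne (hw : AllFourCyclesBalanced w) {u x y z t : V}
    (hux : u ≠ x) (huy : u ≠ y) (huz : u ≠ z) (hut : u ≠ t) (hxy : x ≠ y) (hzt : z ≠ t) :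
    trianglePotential w u x y = trianglePotential w u z t := by
  rcases eq_or_ne z x with rfl | hzx
  · exact hw.trianglePotential_eq hux huy hut hxy hzt
  rcases eq_or_ne z y with rfl | hzy
  · rw [trianglePotential_comm]
    exact hw.trianglePotential_eq huy hux hut hxy.symm hzt
  calc trianglePotential w u x y = trianglePotential w u x z :=
        hw.trianglePotential_eq hux huy huz hxy hzx.symm
    _ = trianglePotential w u z x := trianglePotential_comm w u x z
    _ = trianglePotential w u z t := hw.trianglePotential_eq huz hux hut hzx hzt

theorem exists_potential [NeZero (2 : K)] (hw : AllFourCyclesBalanced w)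
    (hV : ∀ u v : V, ∃ x, x ≠ u ∧ x ≠ v) :
    ∃ lam : V → K, ∀ u v, u ≠ v → w s(u, v) = lam u + lam v := by
  have hpair : ∀ u, ∃ x y, u ≠ x ∧ u ≠ y ∧ x ≠ y := fun u => by
    obtain ⟨x, hxu, -⟩ := hV u u
    obtain ⟨y, hyu, hyx⟩ := hV u x
    exact ⟨x, y, hxu.symm, hyu.symm, hyx.symm⟩
  choose p q hp using hpair
  refine ⟨fun u => trianglePotential w u (p u) (q u), fun u v huv => ?_⟩
  obtain ⟨x, hxu, hxv⟩ := hV u v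
  obtain ⟨hup, huq, hpq⟩ := hp u
  obtain ⟨hvp, hvq, hpq'⟩ := hp v
  rw [← trianglePotential_add_trianglePotential w u v x,
    hw.trianglePotential_eq_of_ne huv hxu.symm hup huq (Ne.symm hxv) hpq,
    hw.trianglePotential_eq_of_ne huv.symm hxv.symm hvp hvq hxu.symm hpq']

end AllFourCyclesBalanced

end Potential

theorem exists_ne_ne_of_two_lt_card {V : Type*} [Fintype V] (hV : 2 < Fintype.card V) (u v : V) :
    ∃ x, x ≠ u ∧ x ≠ v := by
  classical
  obtain ⟨x, -, hx⟩ := Finset.exists_mem_notMem_of_card_lt_card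
    (s := {u, v}) (t := univ) ((card_le_two).trans_lt hV)
  simp only [mem_insert, mem_singleton, not_or] at hx
  exact ⟨x, hx⟩

namespace SimpleGraph

variable {V M : Type*} [Fintype V] [AddCommMonoid M] (G : SimpleGraph V) [DecidableRel G.Adj]

theorem sum_edgeFinset_eq_sum_degree_smul {g : Sym2 V → M} {f : V → M}
    (hg : ∀ x y, G.Adj x y → g s(x, y) = f x + f y) :
    ∑ e ∈ G.edgeFinset, g e = ∑ v, G.degree v • f v := by
  classical
  calc ∑ e ∈ G.edgeFinset, g e = ∑ d : G.Dart, f d.fst := by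
        rw [← Finset.sum_fiberwise_of_maps_to (g := Dart.edge) (t := G.edgeFinset)
          (fun d _ => mem_edgeFinset.mpr d.edge_mem)]
        refine Finset.sum_congr rfl fun e he => ?_
        induction e with
        | _ x y =>
          let d : G.Dart := ⟨(x, y), mem_edgeFinset.mp he⟩
          rw [show ({d' : G.Dart | d'.edge = s(x, y)} : Finset _) = {d, d.symm} from
            d.edge_fiber, sum_pair d.symm_ne.symm, hg x y d.adj]
          rfl
    _ = ∑ v, G.degree v • f v := by
        rw [← Finset.sum_fiberwise_of_maps_to (g := fun d : G.Dart => d.fst) (t := univ)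
          (fun _ _ => mem_univ _)]
        refine Finset.sum_congr rfl fun v _ => ?_
        rw [Finset.sum_congr rfl (fun d hd => by rw [(mem_filter.mp hd).2]), sum_const,
          ← dart_fst_fiber_card_eq_degree]

end SimpleGraph

theorem IsHamCycle.degree_eq_two {n : ℕ} {H : SimpleGraph (Fin n)} [DecidableRel H.Adj]
    (hH : IsHamCycle H) (v : Fin n) : H.degree v = 2 := by
  rw [← hH.2 v, ← SimpleGraph.card_neighborSet_eq_degree, Set.ncard_eq_toFinset_card',
    Set.toFinset_card]

theorem wt_eq_sum_edgeFinset {n : ℕ} (w : Sym2 (Fin n) → ℤ) (G : SimpleGraph (Fin n))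
    [Fintype G.edgeSet] : wt w G = ∑ e ∈ G.edgeFinset, w e := by
  rw [wt]
  congr 1
  ext e
  simp

/-- if every 4-cycle of `K_n` (`n ≥ 5`) is balanced, then `w` decomposes via
vertex potentials: `w(uv) = λ_u + λ_v` for rationals `λ_v`; consequently every Hamilton
cycle has the same weight `2·Σ_v λ_v`. -/
theorem stmt_19 (n : ℕ) (hn : 5 ≤ n) (w : Sym2 (Fin n) → ℤ)
    (hbal : ∀ v1 v2 v3 v4 : Fin n, List.Pairwise (· ≠ ·) [v1, v2, v3, v4] →
      w s(v1, v2) + w s(v3, v4) = w s(v2, v3) + w s(v4, v1)) :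
    ∃ lam : Fin n → ℚ,
      (∀ u v : Fin n, u ≠ v → (w s(u, v) : ℚ) = lam u + lam v) ∧
      ∀ H : SimpleGraph (Fin n), IsHamCycle H → (wt w H : ℚ) = 2 * ∑ v, lam v := by
  have hbalQ : AllFourCyclesBalanced (fun e => (w e : ℚ)) := fun x y z t h => by
    simpa using congrArg (Int.cast : ℤ → ℚ) <| hbal x y z t h
  obtain ⟨lam, hlam⟩ :=
    hbalQ.exists_potential (exists_ne_ne_of_two_lt_card (by rw [Fintype.card_fin]; omega))
  refine ⟨lam, hlam, fun H hH => ?_⟩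
  classical
  rw [wt_eq_sum_edgeFinset, Int.cast_sum,
    H.sum_edgeFinset_eq_sum_degree_smul fun x y hxy => hlam x y hxy.ne, mul_sum]
  simp only [hH.degree_eq_two, two_nsmul, two_mul]
end
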